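/- Let V : ℕ → ℝ be defined by V(n+1) = 0 and V(j) = (1 + V(j+1)²)/2 for 1 ≤ j ≤ n. Then for all 1 ≤ j ≤ n, V(j) ≥ 1 − 2/(n − j + 3). -/
import Mathlib


theorem secretary_value_lower_bound
    (n : ℕ) (V : ℕ → ℝ)
    (hVend : V (n + 1) = 0)
    (hrec : ∀ j, 1 ≤ j → j ≤ n → V j = (1 + V (j + 1)^2) / 2) :
    ∀ j, 1 ≤ j → j ≤ n → V j ≥ 1 - 2 / ((n : ℝ) - j + 3) := by
  have key : ∀ k j, 1 ≤ j → j ≤ n → n - j = k → V j ≥ 1 - 2 / ((n : ℝ) - j + 3) := by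
    intro k
    induction k with
    | zero =>
      intro j hj1 hjn hk
      have hj : j = n := by omega
      subst hj
      rw [hrec j hj1 le_rfl, hVend]
      have : (j : ℝ) - j + 3 = 3 := by ring
      rw [this]
      norm_num
    | succ k ih =>
      intro j hj1 hjn hk
      have hjn' : j + 1 ≤ n := by omega
      have h2 := ih (j + 1) (by omega) hjn' (by omega)
      have hcast : ((j : ℝ) + 1) = ((j + 1 : ℕ) : ℝ) := by push_cast; ring
      have hnj : (1 : ℝ) ≤ (n : ℝ) - j := by
        have : (j + 1 : ℝ) ≤ (n : ℝ) := by exact_mod_cast hjn'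
        linarith
      rw [hrec j hj1 (by omega)]
      push_cast at h2 ⊢
      set m : ℝ := (n : ℝ) - j with hm
      have hm1 : (1 : ℝ) ≤ m := hnj
      have h2' : V (j + 1) ≥ 1 - 2 / (m + 2) := by
        have : (n : ℝ) - (j + 1) + 3 = m + 2 := by rw [hm]; ring
        linarith [h2, this ▸ h2]
      have hm2 : (0 : ℝ) < m + 2 := by linarith
      have hm3 : (0 : ℝ) < m + 3 := by linarith
      have hpos : (0 : ℝ) ≤ 1 - 2 / (m + 2) := by
        rw [sub_nonneg, div_le_one hm2]; linarith
      have hsq : V (j + 1) ^ 2 ≥ (1 - 2 / (m + 2)) ^ 2 := by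
        nlinarith [h2', hpos]
      have hineq : (1 + (1 - 2 / (m + 2)) ^ 2) / 2 ≥ 1 - 2 / (m + 3) := by
        rw [ge_iff_le, sub_le_iff_le_add]
        have key : 2 / (m + 2) - 2 / (m + 2) ^ 2 ≤ 2 / (m + 3) := by
          rw [div_sub_div _ _ (ne_of_gt hm2) (by positivity), div_le_div_iff₀ (by positivity) hm3]
          ring_nf
          nlinarith [hm1]
        have expand : (1 + (1 - 2 / (m + 2)) ^ 2) / 2 = 1 - (2 / (m + 2) - 2 / (m + 2) ^ 2) := by
          field_simp
          ring
        linarith [key, expand.ge]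
      linarith
  intro j hj1 hjn
  exact key (n - j) j hj1 hjn rfl
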